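/- arXiv:2411.11851 — 3 statements merged into one kernel-verified Lean document; each statement's English description precedes it below -/
import Mathlib

section
/- For all real numbers x ≥ 3 and y ≥ 2, (x-1)·√((x-1)/x) + √((x+y-2)/(x·y)) − (x-2)·√((x-2)/(x-1)) − √((x+y-3)/((x-1)·y)) > √5/(2·√2). -/
/-!
With `a = √x` and `b = √(x - 1)`, the two `y`-dependent terms are `√(1/y + t/a²)` and
`√(1/y + t/b²)` with `t = (y - 2)/y ∈ [0, 1)`; by the triangle inequality in `ℝ²` their
difference is at most `1/b - 1/a`. The remaining expression depends on `x` only, and multiplied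
by `ab` it becomes `b⁴ - (b² - 1)√(b⁴ - 1) + b - a`. Bounding `a = √(b² + 1)` and `√(b⁴ - 1)`
from above by truncated Taylor expansions leaves a polynomial inequality in `b ≥ √2`. The
constant `19/24` separates the two sides: `(19/24)² = 361/576 > 5/8`, while the `x`-part is
`≈ 0.796` at `x = 3`.
-/

open Real

lemma sqrt_five_div_two_mul_sqrt_two_lt : √5 / (2 * √2) < 19 / 24 := by
  rw [div_lt_iff₀ (by positivity)]
  nlinarith [sq_sqrt (show (0 : ℝ) ≤ 5 by norm_num), sq_sqrt (show (0 : ℝ) ≤ 2 by norm_num),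
    sqrt_nonneg 5, sqrt_nonneg 2, sq_nonneg (√5 - 19 / 12 * √2)]

lemma sqrt_add_mul_sq_le (s t z w : ℝ) (hs : 0 ≤ s) (ht₀ : 0 ≤ t) (ht₁ : t ≤ 1) :
    √(s + t * z ^ 2) ≤ √(s + t * w ^ 2) + |z - w| := by
  have hS := sq_sqrt (show 0 ≤ s + t * w ^ 2 by positivity)
  have htw : t * |w| ≤ √(s + t * w ^ 2) := by
    rw [le_sqrt (by positivity) (by positivity), mul_pow, sq_abs]
    nlinarith [mul_nonneg (mul_nonneg ht₀ (sub_nonneg.2 ht₁)) (sq_nonneg w)]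
  have hz : z ^ 2 ≤ w ^ 2 + 2 * (|w| * |z - w|) + |z - w| ^ 2 := by
    rw [← abs_mul, sq_abs]
    nlinarith [le_abs_self (w * (z - w))]
  rw [sqrt_le_iff]
  refine ⟨by positivity, ?_⟩
  nlinarith [mul_le_mul_of_nonneg_right htw (abs_nonneg (z - w)),
    mul_le_mul_of_nonneg_left hz ht₀, mul_le_of_le_one_left (sq_nonneg |z - w|) ht₁]

lemma sqrt_sq_add_le (c u : ℝ) (hc : 0 < c) (hu : 0 ≤ u) :
    √(c ^ 2 + u) ≤ c + u / (2 * c) - u ^ 2 / (8 * c ^ 3) + u ^ 3 / (16 * c ^ 5) := by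
  have hrhs : c + u / (2 * c) - u ^ 2 / (8 * c ^ 3) + u ^ 3 / (16 * c ^ 5)
      = (16 * c ^ 6 + 8 * c ^ 4 * u - 2 * c ^ 2 * u ^ 2 + u ^ 3) / (16 * c ^ 5) := by
    field_simp; ring
  have hN : 0 ≤ 16 * c ^ 6 + 8 * c ^ 4 * u - 2 * c ^ 2 * u ^ 2 + u ^ 3 := by
    nlinarith [mul_nonneg hu (add_nonneg (sq_nonneg (u - c ^ 2)) (by positivity : 0 ≤ 7 * c ^ 4)),
      pow_pos hc 6]
  rw [hrhs, sqrt_le_iff]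
  refine ⟨by positivity, ?_⟩
  rw [div_pow, le_div_iff₀ (by positivity)]
  have : (16 * c ^ 6 + 8 * c ^ 4 * u - 2 * c ^ 2 * u ^ 2 + u ^ 3) ^ 2
      - (c ^ 2 + u) * (16 * c ^ 5) ^ 2 = u ^ 4 * ((u - 2 * c ^ 2) ^ 2 + 16 * c ^ 4) := by ring
  nlinarith [show 0 ≤ u ^ 4 * ((u - 2 * c ^ 2) ^ 2 + 16 * c ^ 4) by positivity]

lemma sqrt_sq_sub_le (c u : ℝ) (hc : 0 < c) (hu : 0 ≤ u) (huc : u ≤ c ^ 2) :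
    √(c ^ 2 - u) ≤ c - u / (2 * c) - u ^ 2 / (8 * c ^ 3) := by
  have hrhs : c - u / (2 * c) - u ^ 2 / (8 * c ^ 3)
      = (8 * c ^ 4 - 4 * c ^ 2 * u - u ^ 2) / (8 * c ^ 3) := by
    field_simp; ring
  have hM : 0 ≤ 8 * c ^ 4 - 4 * c ^ 2 * u - u ^ 2 := by
    nlinarith [mul_le_mul_of_nonneg_left huc (sq_nonneg c), mul_le_mul_of_nonneg_left huc hu]
  rw [hrhs, sqrt_le_iff]
  refine ⟨by positivity, ?_⟩
  rw [div_pow, le_div_iff₀ (by positivity)]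
  have : (8 * c ^ 4 - 4 * c ^ 2 * u - u ^ 2) ^ 2 - (c ^ 2 - u) * (8 * c ^ 3) ^ 2
      = 8 * c ^ 2 * u ^ 3 + u ^ 4 := by ring
  nlinarith [show 0 ≤ 8 * c ^ 2 * u ^ 3 + u ^ 4 by positivity]

lemma nineteen_div_twentyFour_mul_sqrt_le (b : ℝ) (hb₀ : 0 < b) (hb : 2 ≤ b ^ 2) :
    19 / 24 * (b * √(b ^ 2 + 1))
      ≤ b ^ 4 - (b ^ 2 - 1) * √((b ^ 2) ^ 2 - 1) + b - √(b ^ 2 + 1) := by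
  have hA := sqrt_sq_add_le b 1 hb₀ zero_le_one
  have hD := sqrt_sq_sub_le (b ^ 2) 1 (by positivity) zero_le_one (by nlinarith)
  simp only [one_pow] at hA hD
  have hpoly : 0 ≤ 80 * b ^ 8 + 40 * b ^ 6 - 192 * b ^ 5 - 154 * b ^ 4 + 48 * b ^ 3 + 29 * b ^ 2
      - 24 * b - 48 := by
    nlinarith [mul_nonneg hb₀.le (sub_nonneg.2 hb), sq_nonneg (b ^ 2 - 2), sq_nonneg (b - 3 / 2),
      pow_pos hb₀ 3, pow_pos hb₀ 5, mul_nonneg (mul_nonneg hb₀.le hb₀.le) (sub_nonneg.2 hb)]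
  have hsplit : b ^ 4 - (b ^ 2 - 1) * (b ^ 2 - 1 / (2 * b ^ 2) - 1 / (8 * (b ^ 2) ^ 3)) + b
      - (1 + 19 / 24 * b) * (b + 1 / (2 * b) - 1 / (8 * b ^ 3) + 1 / (16 * b ^ 5))
      = (80 * b ^ 8 + 40 * b ^ 6 - 192 * b ^ 5 - 154 * b ^ 4 + 48 * b ^ 3 + 29 * b ^ 2
      - 24 * b - 48) / (384 * b ^ 6) := by
    field_simp; ring
  have := div_nonneg hpoly (by positivity : (0 : ℝ) ≤ 384 * b ^ 6)
  nlinarith [mul_le_mul_of_nonneg_left hA (by positivity : (0 : ℝ) ≤ 1 + 19 / 24 * b),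
    mul_le_mul_of_nonneg_left hD (by linarith : (0 : ℝ) ≤ b ^ 2 - 1)]

lemma nineteen_div_twentyFour_le_sub_sqrt (x : ℝ) (hx : 3 ≤ x) :
    19 / 24 ≤ (x - 1) * √((x - 1) / x) - (x - 2) * √((x - 2) / (x - 1))
      - ((√(x - 1))⁻¹ - (√x)⁻¹) := by
  have hb₀ : 0 < √(x - 1) := sqrt_pos.2 (by linarith)
  have ha₀ : 0 < √x := sqrt_pos.2 (by linarith)
  have hb2 : √(x - 1) ^ 2 = x - 1 := sq_sqrt (by linarith)
  have ha : √x = √(√(x - 1) ^ 2 + 1) := by rw [hb2]; ring_nf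
  have had : √x * √(x - 2) = √((√(x - 1) ^ 2) ^ 2 - 1) := by
    rw [← sqrt_mul (by linarith), hb2]; ring_nf
  have key := nineteen_div_twentyFour_mul_sqrt_le (√(x - 1)) hb₀ (by linarith)
  rw [← ha, ← had] at key
  rw [sqrt_div' _ (by linarith : (0:ℝ) ≤ x), sqrt_div' _ (by linarith : (0:ℝ) ≤ x - 1)]
  set a := √x
  set b := √(x - 1)
  set d := √(x - 2)
  have hsum : (x - 1) * (b / a) - (x - 2) * (d / b) - (b⁻¹ - a⁻¹)
      = ((b ^ 2) ^ 2 - (b ^ 2 - 1) * (a * d) + b - a) / (b * a) := by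
    rw [show x - 2 = b ^ 2 - 1 by rw [hb2]; ring, ← hb2]
    field_simp
    ring
  rw [hsum, le_div_iff₀ (by positivity)]
  linarith

theorem stmt3 (x y : ℝ) (hx : 3 ≤ x) (hy : 2 ≤ y) :
    (x - 1) * Real.sqrt ((x - 1) / x) + Real.sqrt ((x + y - 2) / (x * y))
      - (x - 2) * Real.sqrt ((x - 2) / (x - 1)) - Real.sqrt ((x + y - 3) / ((x - 1) * y))
      > Real.sqrt 5 / (2 * Real.sqrt 2) := by
  have hy₀ : 0 < y := by linarith
  have hsplit : ∀ z : ℝ, 0 < z →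
      (z + y - 2) / (z * y) = 1 / y + (y - 2) / y * ((√z)⁻¹) ^ 2 := by
    intro z hz
    rw [inv_pow, sq_sqrt hz.le]
    field_simp
    ring
  have hinv : (√x)⁻¹ ≤ (√(x - 1))⁻¹ :=
    inv_anti₀ (sqrt_pos.2 (by linarith)) (sqrt_le_sqrt (by linarith))
  have hyterms := sqrt_add_mul_sq_le (1 / y) ((y - 2) / y) (√(x - 1))⁻¹ (√x)⁻¹
    (by positivity) (div_nonneg (by linarith) hy₀.le) ((div_le_one hy₀).2 (by linarith))
  rw [← hsplit x (by linarith), ← hsplit (x - 1) (by linarith),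
    show x - 1 + y - 2 = x + y - 3 by ring, abs_of_nonneg (sub_nonneg.2 hinv)]
    at hyterms
  linarith [nineteen_div_twentyFour_le_sub_sqrt x hx, sqrt_five_div_two_mul_sqrt_two_lt]
end

section
/- A connected graph G of order n ≥ 2 has metric dimension 1 if and only if G is isomorphic to the path graph P_n. -/
open scoped Classical

/-- Degree of a vertex. -/
noncomputable def deg {V : Type*} [Fintype V] (G : SimpleGraph V) (v : V) : ℕ :=
  (Finset.univ.filter (fun u => G.Adj v u)).card

/-- First Zagreb index: sum of squares of degrees. -/
noncomputable def M1 {V : Type*} [Fintype V] (G : SimpleGraph V) : ℕ :=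
  ∑ v, (deg G v) ^ 2

/-- Second Zagreb index: sum over edges of products of endpoint degrees. -/
noncomputable def M2 {V : Type*} [Fintype V] (G : SimpleGraph V) : ℕ :=
  ∑ e ∈ G.edgeFinset,
    Sym2.lift ⟨fun u v => deg G u * deg G v, fun u v => Nat.mul_comm _ _⟩ e

/-- Atom-bond connectivity index. -/
noncomputable def ABC {V : Type*} [Fintype V] (G : SimpleGraph V) : ℝ :=
  ∑ e ∈ G.edgeFinset,
    Sym2.lift ⟨fun u v =>
      Real.sqrt (((deg G u : ℝ) + (deg G v : ℝ) - 2) / ((deg G u : ℝ) * (deg G v : ℝ))),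
      fun u v => by dsimp only; rw [add_comm ((deg G u : ℝ)), mul_comm ((deg G u : ℝ))]⟩ e

/-- A set of vertices is resolving if every pair of distinct vertices is
distinguished by its distance to some member of the set. -/
def IsResolving {V : Type*} [Fintype V] (G : SimpleGraph V) (S : Finset V) : Prop :=
  ∀ u v : V, u ≠ v → ∃ s ∈ S, G.dist u s ≠ G.dist v s

/-- The metric dimension: minimum size of a resolving set. -/
noncomputable def metricDim {V : Type*} [Fintype V] (G : SimpleGraph V) : ℕ :=
  sInf {k | ∃ S : Finset V, IsResolving G S ∧ S.card = k}

/-- The star graph on `n` vertices: vertex `0` is adjacent to all others. -/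
def starGraph (n : ℕ) : SimpleGraph (Fin n) where
  Adj u v := u ≠ v ∧ (u.val = 0 ∨ v.val = 0)
  symm := ⟨by intro u v h; exact ⟨h.1.symm, h.2.symm⟩⟩
  loopless := ⟨fun v h => h.1 rfl⟩

/-!
If the distances to one vertex `s` separate all vertices, then `v ↦ d(v, s)` is a bijection onto
`{0, …, n - 1}`. Every `v ≠ s` has a neighbour one step closer to `s`, which by injectivity is the
only vertex at distance `d(v, s) - 1`; and adjacent vertices have distances differing by at most
one, hence by exactly one. So this bijection is an isomorphism onto `P_n`. Conversely, an end
vertex of `P_n` resolves it, while for `n ≥ 2` the empty set resolves nothing.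
-/

namespace SimpleGraph

variable {V W : Type*} {G : SimpleGraph V} {G' : SimpleGraph W}

lemma Hom.edist_le (f : G →g G') (u v : V) : G'.edist (f u) (f v) ≤ G.edist u v := by
  by_cases h : G.Reachable u v
  · obtain ⟨p, hp⟩ := h.exists_walk_length_eq_edist
    rw [← hp, ← Walk.length_map f]
    exact SimpleGraph.edist_le _
  · rw [edist_eq_top_of_not_reachable h]
    exact le_top

lemma Iso.edist_eq (f : G ≃g G') (u v : V) : G'.edist (f u) (f v) = G.edist u v :=
  le_antisymm (f.toHom.edist_le u v) (by simpa using f.symm.toHom.edist_le (f u) (f v))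

lemma Iso.dist_eq (f : G ≃g G') (u v : V) : G'.dist (f u) (f v) = G.dist u v := by
  simp only [dist, f.edist_eq]

lemma dist_lt_card [Fintype V] (u v : V) : G.dist u v < Fintype.card V := by
  by_cases h : G.Reachable u v
  · obtain ⟨p, hp, hlen⟩ := h.exists_path_of_dist
    exact hlen ▸ hp.length_lt
  · rw [dist_eq_zero_of_not_reachable h]
    exact Fintype.card_pos_iff.mpr ⟨u⟩

lemma Reachable.exists_adj_dist_add_one {u s : V} (h : G.Reachable u s) (hne : u ≠ s) :
    ∃ w, G.Adj u w ∧ G.dist w s + 1 = G.dist u s := by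
  obtain ⟨p, hp⟩ := h.exists_walk_length_eq_dist
  cases p with
  | nil => exact absurd rfl hne
  | @cons _ w _ hadj q =>
    refine ⟨w, hadj, ?_⟩
    have hq : G.dist w s ≤ q.length := dist_le q
    have htri : G.dist u s ≤ G.dist u w + G.dist w s := hadj.reachable.dist_triangle_left s
    rw [dist_eq_one_iff_adj.mpr hadj] at htri
    rw [Walk.length_cons] at hp
    omega

lemma pathGraph_le_add_length {n : ℕ} {u v : Fin n} (p : (pathGraph n).Walk u v) :
    u.val ≤ v.val + p.length ∧ v.val ≤ u.val + p.length := by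
  induction p with
  | nil => simp
  | cons hadj _ ih =>
    rw [pathGraph_adj] at hadj
    rw [Walk.length_cons]
    omega

lemma pathGraph_dist_of_le {n : ℕ} {u v : Fin n} (h : v ≤ u) :
    (pathGraph n).dist u v = u.val - v.val := by
  apply le_antisymm
  · obtain ⟨d, hd⟩ : ∃ d, u.val = v.val + d := ⟨u.val - v.val, by omega⟩
    induction d generalizing u with
    | zero => simp [show u = v from Fin.ext (by simpa using hd)]
    | succ d ih =>
      let w : Fin n := ⟨v.val + d, by omega⟩
      have hadj : (pathGraph n).Adj u w := pathGraph_adj.mpr (Or.inr (by simp [w]; omega))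
      calc (pathGraph n).dist u v ≤ (pathGraph n).dist u w + (pathGraph n).dist w v :=
            hadj.reachable.dist_triangle_left v
        _ ≤ 1 + (w.val - v.val) := by
            gcongr
            · exact (dist_eq_one_iff_adj.mpr hadj).le
            · exact ih (by simp [Fin.le_def, w]) rfl
        _ = u.val - v.val := by simp [w]; omega
  · obtain ⟨p, hp⟩ := (pathGraph_preconnected n u v).exists_walk_length_eq_dist
    have := pathGraph_le_add_length p
    omega

lemma Iso.injective_dist_symm (f : G ≃g G') {t : W} (ht : Function.Injective (G'.dist · t)) :
    Function.Injective (G.dist · (f.symm t)) := by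
  intro u v h
  apply f.injective
  apply ht
  simpa only [← f.dist_eq, f.apply_symm_apply] using h

lemma pathGraph_injective_dist_zero {n : ℕ} (hn : 0 < n) :
    Function.Injective ((pathGraph n).dist · ⟨0, hn⟩) := by
  intro u v h
  have h0 : ∀ w : Fin n, (⟨0, hn⟩ : Fin n) ≤ w := fun w => Nat.zero_le w.val
  simp only [pathGraph_dist_of_le (h0 _), Nat.sub_zero] at h
  exact Fin.ext h

variable {s : V}

lemma adj_iff_dist_add_one_of_injective (hG : G.Preconnected)
    (hinj : Function.Injective (G.dist · s)) {u v : V} :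
    G.Adj u v ↔ G.dist u s + 1 = G.dist v s ∨ G.dist v s + 1 = G.dist u s := by
  have adj_of_dist : ∀ {a b}, G.dist a s + 1 = G.dist b s → G.Adj b a := by
    intro a b h
    have hbs : b ≠ s := by rintro rfl; simp at h
    obtain ⟨w, hw, hws⟩ := (hG b s).exists_adj_dist_add_one hbs
    rwa [hinj (show G.dist w s = G.dist a s by omega)] at hw
  refine ⟨fun hadj => ?_, fun h => h.elim (fun h => (adj_of_dist h).symm) adj_of_dist⟩
  have hne : G.dist u s ≠ G.dist v s := fun h => hadj.ne (hinj h)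
  have := hadj.diff_dist_adj (u := s)
  rw [dist_comm, dist_comm (u := s)] at this
  omega

noncomputable def isoPathGraphOfInjectiveDist [Fintype V] (hG : G.Preconnected)
    (hinj : Function.Injective (G.dist · s)) : G ≃g pathGraph (Fintype.card V) where
  toEquiv := Equiv.ofBijective (fun v => ⟨G.dist v s, dist_lt_card v s⟩)
    ((Fintype.bijective_iff_injective_and_card _).mpr
      ⟨fun _ _ h => hinj (Fin.val_eq_of_eq h), Fintype.card_fin _ |>.symm⟩)
  map_rel_iff' := by
    simp [pathGraph_adj, adj_iff_dist_add_one_of_injective hG hinj]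

end SimpleGraph

section MetricDimension

variable {V : Type*} [Fintype V] {G : SimpleGraph V}

lemma isResolving_singleton_iff {s : V} :
    IsResolving G {s} ↔ Function.Injective (G.dist · s) := by
  simp only [IsResolving, Finset.mem_singleton, exists_eq_left, Function.Injective]
  exact forall₂_congr fun _ _ => not_imp_not

lemma isResolving_univ (hG : G.Preconnected) : IsResolving G Finset.univ := by
  intro u v huv
  refine ⟨u, Finset.mem_univ u, ?_⟩
  rw [SimpleGraph.dist_self]
  exact ((hG v u).pos_dist_of_ne huv.symm).ne

lemma not_isResolving_empty [Nontrivial V] : ¬IsResolving G ∅ := by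
  obtain ⟨u, v, huv⟩ := exists_pair_ne V
  intro h
  simpa using h u v huv

lemma exists_isResolving_card_eq_metricDim (hG : G.Preconnected) :
    ∃ S, IsResolving G S ∧ S.card = metricDim G :=
  Nat.sInf_mem (s := {k | ∃ S : Finset V, IsResolving G S ∧ S.card = k})
    ⟨_, Finset.univ, isResolving_univ hG, rfl⟩

lemma metricDim_eq_one_iff [Nontrivial V] (hG : G.Preconnected) :
    metricDim G = 1 ↔ ∃ s, IsResolving G {s} := by
  obtain ⟨S, hS, hcard⟩ := exists_isResolving_card_eq_metricDim hG
  constructor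
  · intro h
    obtain ⟨s, rfl⟩ := Finset.card_eq_one.mp (hcard.trans h)
    exact ⟨s, hS⟩
  · rintro ⟨s, hs⟩
    have hle : metricDim G ≤ 1 := Nat.sInf_le ⟨{s}, hs, Finset.card_singleton s⟩
    have hS_ne : S.Nonempty :=
      Finset.nonempty_iff_ne_empty.mpr (by rintro rfl; exact not_isResolving_empty hS)
    have := Finset.card_pos.mpr hS_ne
    omega

end MetricDimension

theorem stmt10 {V : Type*} [Fintype V] (G : SimpleGraph V) (hG : G.Connected)
    (hn : 2 ≤ Fintype.card V) :
    metricDim G = 1 ↔ Nonempty (G ≃g SimpleGraph.pathGraph (Fintype.card V)) := by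
  have : Nontrivial V := Fintype.one_lt_card_iff_nontrivial.mp hn
  rw [metricDim_eq_one_iff hG.preconnected]
  constructor
  · rintro ⟨s, hs⟩
    exact ⟨SimpleGraph.isoPathGraphOfInjectiveDist hG.preconnected
      (isResolving_singleton_iff.mp hs)⟩
  · rintro ⟨f⟩
    have hpos : 0 < Fintype.card V := by omega
    exact ⟨f.symm ⟨0, hpos⟩, isResolving_singleton_iff.mpr
      (f.injective_dist_symm (SimpleGraph.pathGraph_injective_dist_zero hpos))⟩
end

section
/- Let T be a tree of order n ≥ 4 with metric dimension ε(T). Then the first Zagreb index satisfies M₁(T) ≥ 4n − 7 + ε(T), with equality when T is the path P_n. -/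
open scoped Classical

/-! Write `d v` for the degrees and `L` for the number of leaves. In a tree `∑ (d v - 2) = -2`,
and `(d - 2) (d - 3)` is a nonnegative integer equal to `2` at `d = 1`; summing it gives
`M₁ ≥ 4n - 10 + 2L`. The leaves resolve the tree: for `u ≠ v`, a leaf lying beyond `v` as seen
from `u` is farther from `u` than from `v`. Hence `ε ≤ L`, which settles the case `L ≥ 3`.
If `L ≤ 2`, then `∑ (d v - 2) = -2` forces every degree to be at most `2`; then `M₁ = 4n - 6`,
and distances to one end vertex are injective, so `ε = 1`. -/

open Finset

section DegreeSequence

variable {ι : Type*} [Fintype ι] {d : ι → ℕ}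

lemma card_three_le_add_two_le (hpos : ∀ i, 1 ≤ d i)
    (hsum : ∑ i, d i + 2 = 2 * Fintype.card ι) :
    #{i | 3 ≤ d i} + 2 ≤ #{i | d i = 1} := by
  have key : ∀ i ∈ univ,
      (if 3 ≤ d i then (1 : ℤ) else 0) - (if d i = 1 then 1 else 0) ≤ d i - 2 := by
    intro i _
    have := hpos i
    split_ifs <;> omega
  have hsumZ : ∑ i, (d i : ℤ) + 2 = 2 * Fintype.card ι := by exact_mod_cast hsum
  have := sum_le_sum key
  simp only [sum_sub_distrib, sum_boole, sum_const, card_univ, nsmul_eq_mul] at this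
  omega

lemma four_mul_card_add_two_mul_le (hpos : ∀ i, 1 ≤ d i)
    (hsum : ∑ i, d i + 2 = 2 * Fintype.card ι) :
    4 * Fintype.card ι + 2 * #{i | d i = 1} ≤ ∑ i, d i ^ 2 + 10 := by
  -- `d ^ 2 - 5 d + 6 = (d - 2) (d - 3)`
  have key : ∀ i ∈ univ,
      2 * (if d i = 1 then (1 : ℤ) else 0) ≤ (d i ^ 2 - 5 * d i + 6 : ℤ) := by
    intro i _
    rcases (by have := hpos i; omega : d i = 1 ∨ d i = 2 ∨ 3 ≤ d i) with h | h | h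
    · simp [h]
    · simp [h]
    · have : (3 : ℤ) ≤ d i := by exact_mod_cast h
      simp only [show d i ≠ 1 by omega, if_false]
      nlinarith
  have hsumZ : ∑ i, (d i : ℤ) + 2 = 2 * Fintype.card ι := by exact_mod_cast hsum
  have := sum_le_sum key
  simp only [← mul_sum, sum_add_distrib, sum_sub_distrib, sum_boole, sum_const, card_univ,
    nsmul_eq_mul] at this
  have hsq : ∑ i, (d i : ℤ) ^ 2 = ((∑ i, d i ^ 2 : ℕ) : ℤ) := by push_cast; rfl
  omega

lemma sum_sq_add_six_of_le_two (hpos : ∀ i, 1 ≤ d i) (hle : ∀ i, d i ≤ 2)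
    (hsum : ∑ i, d i + 2 = 2 * Fintype.card ι) :
    ∑ i, d i ^ 2 + 6 = 4 * Fintype.card ι := by
  have key : ∀ i, d i ^ 2 + 2 = 3 * d i := by
    intro i
    have := hpos i; have := hle i
    interval_cases d i <;> rfl
  have := sum_congr rfl fun i (_ : i ∈ univ) => key i
  rw [sum_add_distrib, ← mul_sum, sum_const, card_univ, smul_eq_mul] at this
  omega

lemma le_two_of_card_eq_one_le_two (hpos : ∀ i, 1 ≤ d i)
    (hsum : ∑ i, d i + 2 = 2 * Fintype.card ι) (hleaves : #{i | d i = 1} ≤ 2) (i : ι) :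
    d i ≤ 2 := by
  by_contra! hi
  have := card_three_le_add_two_le hpos hsum
  have : 0 < #{i | 3 ≤ d i} := card_pos.mpr ⟨i, by simp only [mem_filter_univ]; omega⟩
  omega

end DegreeSequence

namespace SimpleGraph

variable {V : Type*} {G : SimpleGraph V}

lemma exists_adj_dist_eq_of_dist_eq_add_one {u s : V} {k : ℕ} (h : G.dist u s = k + 1) :
    ∃ w, G.Adj u w ∧ G.dist w s = k := by
  obtain ⟨p, hp⟩ := exists_walk_of_dist_ne_zero (by omega : G.dist u s ≠ 0)
  rw [h] at hp
  cases p with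
  | nil => simp at hp
  | cons hadj q =>
    refine ⟨_, hadj, le_antisymm ?_ ?_⟩
    · have := dist_le q
      rw [Walk.length_cons] at hp
      omega
    · have := hadj.reachable.dist_triangle_left s
      rw [dist_eq_one_iff_adj.mpr hadj] at this
      omega

lemma IsTree.eq_of_adj_of_dist_lt (hG : G.IsTree) {u v w₁ w₂ : V}
    (h₁ : G.Adj v w₁) (h₂ : G.Adj v w₂)
    (hd₁ : G.dist u w₁ < G.dist u v) (hd₂ : G.dist u w₂ < G.dist u v) :
    w₁ = w₂ := by
  have geodesic (w : V) (h : G.Adj v w) (hd : G.dist u w < G.dist u v) :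
      ∃ p : G.Walk w u, (p.cons h).IsPath := by
    obtain ⟨p, hp⟩ := (hG.connected w u).exists_walk_length_eq_dist
    refine ⟨p, Walk.isPath_of_length_eq_dist _ ?_⟩
    have := hG.dist_eq_dist_add_one_of_adj u h
    rw [Walk.length_cons, hp, dist_comm, dist_comm (u := v)]
    omega
  obtain ⟨p₁, hp₁⟩ := geodesic w₁ h₁ hd₁
  obtain ⟨p₂, hp₂⟩ := geodesic w₂ h₂ hd₂
  simpa using congrArg Walk.snd ((hG.existsUnique_path v u).unique hp₁ hp₂)

variable [Fintype V]

lemma IsTree.one_le_degree [Nontrivial V] (hG : G.IsTree) (v : V) : 1 ≤ G.degree v :=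
  hG.connected.preconnected.degree_pos_of_nontrivial v

lemma IsTree.sum_degree_add_two (hG : G.IsTree) :
    ∑ v, G.degree v + 2 = 2 * Fintype.card V := by
  have := hG.card_edgeFinset
  rw [sum_degrees_eq_twice_card_edges]
  omega

lemma IsTree.exists_adj_dist_eq_add_one (hG : G.IsTree) (u : V) {v : V} (hv : 2 ≤ G.degree v) :
    ∃ w, G.Adj v w ∧ G.dist u w = G.dist u v + 1 := by
  obtain ⟨w₁, hw₁, w₂, hw₂, hne⟩ :=
    one_lt_card.mp (G.card_neighborFinset_eq_degree v ▸ hv)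
  rw [mem_neighborFinset] at hw₁ hw₂
  by_contra! hfar
  have hd₁ := hG.dist_eq_dist_add_one_of_adj u hw₁
  have hd₂ := hG.dist_eq_dist_add_one_of_adj u hw₂
  have := hfar w₁ hw₁
  have := hfar w₂ hw₂
  exact hne (hG.eq_of_adj_of_dist_lt (u := u) hw₁ hw₂ (by omega) (by omega))

lemma IsTree.exists_degree_le_one_dist_eq_add (hG : G.IsTree) (u v : V) :
    ∃ s, G.degree s ≤ 1 ∧ G.dist u s = G.dist u v + G.dist v s := by
  obtain ⟨s, hs, hmax⟩ := exists_max_image {s | G.dist u s = G.dist u v + G.dist v s}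
    (G.dist u) ⟨v, by simp⟩
  rw [mem_filter_univ] at hs
  refine ⟨s, not_lt.mp fun hdeg => ?_, hs⟩
  obtain ⟨w, hsw, hw⟩ := hG.exists_adj_dist_eq_add_one u hdeg
  have huw := hG.connected.dist_triangle (u := u) (v := v) (w := w)
  have hvw := hG.connected.dist_triangle (u := v) (v := s) (w := w)
  rw [dist_eq_one_iff_adj.mpr hsw] at hvw
  have := hmax w (by rw [mem_filter_univ]; omega)
  omega

lemma Connected.dist_left_injective_of_degree_le_two (hG : G.Connected)
    (hmax : ∀ v, G.degree v ≤ 2) {s : V} (hs : G.degree s ≤ 1) :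
    Function.Injective (G.dist · s) := by
  suffices ∀ k u v, G.dist u s = k → G.dist v s = k → u = v from
    fun u v h => this _ u v h rfl
  intro k
  induction k with
  | zero =>
    intro u v hu hv
    rw [hG.dist_eq_zero_iff] at hu hv
    rw [hu, hv]
  | succ k ih =>
    intro u v hu hv
    obtain ⟨w, huw, hw⟩ := exists_adj_dist_eq_of_dist_eq_add_one hu
    obtain ⟨w', hvw', hw'⟩ := exists_adj_dist_eq_of_dist_eq_add_one hv
    obtain rfl : w = w' := ih w w' hw hw'
    by_contra huv
    have hwu : u ∈ G.neighborFinset w := by simpa using huw.symm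
    have hwv : v ∈ G.neighborFinset w := by simpa using hvw'.symm
    cases k with
    | zero =>
      rw [hG.dist_eq_zero_iff] at hw
      subst hw
      have := one_lt_card.mpr ⟨u, hwu, v, hwv, huv⟩
      rw [card_neighborFinset_eq_degree] at this
      omega
    | succ j =>
      obtain ⟨x, hwx, hx⟩ := exists_adj_dist_eq_of_dist_eq_add_one hw
      have := two_lt_card_iff.mpr ⟨u, v, x, hwu, hwv, by simpa using hwx, huv,
        fun h => by subst h; omega, fun h => by subst h; omega⟩
      rw [card_neighborFinset_eq_degree] at this
      exact absurd (hmax w) (by omega)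

lemma pathGraph_degree_le_two (n : ℕ) (i : Fin n) : (pathGraph n).degree i ≤ 2 := by
  rw [← card_neighborFinset_eq_degree]
  calc #((pathGraph n).neighborFinset i) ≤ #({i.val - 1, i.val + 1} : Finset ℕ) :=
        card_le_card_of_injOn Fin.val (fun j hj => by
          simp only [coe_insert, coe_singleton, Set.mem_insert_iff, Set.mem_singleton_iff,
            mem_coe, mem_neighborFinset, pathGraph_adj] at hj ⊢
          omega) Fin.val_injective.injOn
    _ ≤ 2 := card_le_two

end SimpleGraph

section MetricDimension

variable {V : Type*} [Fintype V] {G : SimpleGraph V}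

lemma metricDim_le_card {S : Finset V} (h : IsResolving G S) : metricDim G ≤ #S :=
  Nat.sInf_le ⟨S, h, rfl⟩

lemma metricDim_eq_one_of_isResolving_singleton [Nontrivial V] {s : V}
    (h : IsResolving G {s}) : metricDim G = 1 := by
  have hne : {k | ∃ S : Finset V, IsResolving G S ∧ #S = k}.Nonempty := ⟨_, {s}, h, rfl⟩
  obtain ⟨S, hS, hcard⟩ := Nat.sInf_mem hne
  obtain ⟨u, v, huv⟩ := exists_pair_ne V
  obtain ⟨t, ht, -⟩ := hS u v huv
  have := card_pos.mpr ⟨t, ht⟩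
  have := metricDim_le_card h
  rw [card_singleton] at this
  change #S = metricDim G at hcard
  omega

lemma SimpleGraph.IsTree.isResolving_leaves [Nontrivial V] (hG : G.IsTree) :
    IsResolving G {v | G.degree v = 1} := by
  intro u v huv
  obtain ⟨s, hs, hdist⟩ := hG.exists_degree_le_one_dist_eq_add u v
  have := hG.one_le_degree s
  refine ⟨s, by simpa using (by omega : G.degree s = 1), ?_⟩
  have := hG.connected.pos_dist_of_ne huv
  omega

lemma SimpleGraph.Connected.isResolving_singleton_of_degree_le_two (hG : G.Connected)
    (hmax : ∀ v, G.degree v ≤ 2) {s : V} (hs : G.degree s ≤ 1) : IsResolving G {s} :=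
  fun _ _ huv => ⟨s, mem_singleton_self s,
    fun h => huv (hG.dist_left_injective_of_degree_le_two hmax hs h)⟩

end MetricDimension

lemma deg_eq_degree {V : Type*} [Fintype V] (G : SimpleGraph V) (v : V) :
    deg G v = G.degree v := by
  rw [deg, SimpleGraph.degree, SimpleGraph.neighborFinset_eq_filter]

lemma M1_eq_sum_degree_sq {V : Type*} [Fintype V] (G : SimpleGraph V) :
    M1 G = ∑ v, G.degree v ^ 2 := by
  simp only [M1, deg_eq_degree]

lemma SimpleGraph.IsTree.M1_add_six_and_metricDim_of_degree_le_two {V : Type*} [Fintype V]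
    [Nontrivial V] {T : SimpleGraph V} (hT : T.IsTree) (hmax : ∀ v, T.degree v ≤ 2) :
    M1 T + 6 = 4 * Fintype.card V ∧ metricDim T = 1 := by
  obtain ⟨s, hs⟩ := hT.exists_vert_degree_one_of_nontrivial
  refine ⟨?_, metricDim_eq_one_of_isResolving_singleton
    (hT.connected.isResolving_singleton_of_degree_le_two hmax hs.le)⟩
  rw [M1_eq_sum_degree_sq]
  exact sum_sq_add_six_of_le_two hT.one_le_degree hmax hT.sum_degree_add_two

theorem stmt12 {V : Type*} [Fintype V] (T : SimpleGraph V) (hT : T.IsTree)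
    (hn : 4 ≤ Fintype.card V) :
    4 * Fintype.card V - 7 + metricDim T ≤ M1 T ∧
      (Nonempty (T ≃g SimpleGraph.pathGraph (Fintype.card V)) →
        M1 T = 4 * Fintype.card V - 7 + metricDim T) := by
  have : Nontrivial V := Fintype.one_lt_card_iff_nontrivial.mp (by omega)
  have hpos := hT.one_le_degree
  have hM1 := four_mul_card_add_two_mul_le hpos hT.sum_degree_add_two
  have hdim := metricDim_le_card hT.isResolving_leaves
  refine ⟨?_, fun ⟨f⟩ => ?_⟩
  · by_cases hleaves : 3 ≤ #{v | T.degree v = 1}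
    · rw [M1_eq_sum_degree_sq]
      omega
    · have := hT.M1_add_six_and_metricDim_of_degree_le_two
        (le_two_of_card_eq_one_le_two hpos hT.sum_degree_add_two (by omega))
      omega
  · have := hT.M1_add_six_and_metricDim_of_degree_le_two fun v =>
      f.degree_eq v ▸ SimpleGraph.pathGraph_degree_le_two _ (f v)
    omega
end
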